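/- (Duality in the cohomology of G_{2,N}) Let N ≥ 2 and let i ≥ j ≥ 0 and a ≥ b ≥ 0 be integers with i ≤ N−2, a ≤ N−2 and i+j+a+b = 2(N−2). If (a,b) = (N−2−j, N−2−i), then π_{i,j}(x,y)·π_{a,b}(x,y) − π_{N−2,N−2}(x,y) lies in the ideal of ℚ[x,y] generated by π_{N−1,0}(x,y) and π_{N,0}(x,y); if (a,b) ≠ (N−2−j, N−2−i), then π_{i,j}(x,y)·π_{a,b}(x,y) itself lies in that ideal. -/

import Mathlib

/-!
Write `h_m = π_{m,0}` and `e = xy`. Every `π_{i,j}` satisfies the bialternant formula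
`(x - y) π_{i,j} = x^{i+1} y^j - x^j y^{i+1}`, and `ℚ[x,y]` is a domain, so identities among the
`π_{i,j}` can be checked after multiplying by `x - y`, where they become ring identities.

The ideal `I = (h_{N-1}, h_N)` contains every `π_{i,j}` with `i ≥ N - 1`: first the `h_m`, by the
recurrence `h_{m+2} = (x + y) h_{m+1} - e h_m`, then all of them by the Pieri rule
`(x + y) π_{i,j} = π_{i+1,j} + π_{i,j+1}`. The Clebsch–Gordan expansion
`π_{i,j} π_{a,b} = Σ_{k=0}^{a-b} π_{i+a-k, j+b+k}` (for `a - b ≤ i - j`) has all first indices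
`≥ i + b`; under `i + j + a + b = 2(N - 2)` this is `≥ N - 1` unless `(a, b) = (N-2-j, N-2-i)`, and
then only the last term `π_{N-2,N-2}` escapes `I`.
-/

open MvPolynomial

/-- The two-variable Schur polynomial `π_{i,j}(x,y) = Σ_{ℓ=j}^{i} x^ℓ y^{i+j−ℓ}` in `ℚ[x,y]`,
for integers `i ≥ j ≥ 0`. -/
noncomputable def schur2 (i j : ℕ) : MvPolynomial (Fin 2) ℚ :=
  ∑ ℓ ∈ Finset.Icc j i, X 0 ^ ℓ * X 1 ^ (i + j - ℓ)

lemma schur2_mul_X_sub_X {i j : ℕ} (hji : j ≤ i) :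
    schur2 i j * (X 0 - X 1) = X 0 ^ (i + 1) * X 1 ^ j - X 0 ^ j * X 1 ^ (i + 1) := by
  obtain ⟨d, rfl⟩ := Nat.exists_eq_add_of_le hji
  have h : schur2 (j + d) j =
      (X 0 * X 1) ^ j * ∑ k ∈ Finset.range (d + 1), X 0 ^ k * X 1 ^ (d + 1 - 1 - k) := by
    rw [schur2, ← Finset.Ico_add_one_right_eq_Icc, Finset.sum_Ico_eq_sum_range, Finset.mul_sum]
    refine Finset.sum_congr (by congr 1; omega) fun k hk => ?_
    rw [Finset.mem_range] at hk
    rw [show j + d + j - (j + k) = j + (d + 1 - 1 - k) by omega]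
    ring
  rw [h, mul_assoc, geom_sum₂_mul]
  ring

lemma X_zero_sub_X_one_ne_zero : (X 0 - X 1 : MvPolynomial (Fin 2) ℚ) ≠ 0 :=
  sub_ne_zero.mpr (X_injective.ne (by decide))

lemma schur2_zero_zero : schur2 0 0 = 1 := by
  simp [schur2]

lemma X_mul_X_pow_mul_schur2 (c : ℕ) {i j : ℕ} (hji : j ≤ i) :
    (X 0 * X 1) ^ c * schur2 i j = schur2 (i + c) (j + c) := by
  refine mul_right_cancel₀ X_zero_sub_X_one_ne_zero ?_
  rw [mul_assoc, schur2_mul_X_sub_X hji, schur2_mul_X_sub_X (by omega)]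
  ring

lemma X_add_X_mul_schur2 {i j : ℕ} (hji : j < i) :
    (X 0 + X 1) * schur2 i j = schur2 (i + 1) j + schur2 i (j + 1) := by
  refine mul_right_cancel₀ X_zero_sub_X_one_ne_zero ?_
  linear_combination (X 0 + X 1) * schur2_mul_X_sub_X hji.le -
    schur2_mul_X_sub_X (show j ≤ i + 1 by omega) - schur2_mul_X_sub_X (show j + 1 ≤ i from hji)

lemma schur2_succ_zero_mul_schur2_succ_zero (p q : ℕ) :
    schur2 (p + 1) 0 * schur2 (q + 1) 0 =
      schur2 (p + q + 2) 0 + X 0 * X 1 * (schur2 p 0 * schur2 q 0) := by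
  refine mul_right_cancel₀ (pow_ne_zero 2 X_zero_sub_X_one_ne_zero) ?_
  have h (m : ℕ) := schur2_mul_X_sub_X (Nat.zero_le m)
  linear_combination schur2 (q + 1) 0 * (X 0 - X 1) * h (p + 1) +
    (X 0 ^ (p + 2) - X 1 ^ (p + 2)) * h (q + 1) - (X 0 - X 1) * h (p + q + 2) -
    X 0 * X 1 * schur2 q 0 * (X 0 - X 1) * h p - X 0 * X 1 * (X 0 ^ (p + 1) - X 1 ^ (p + 1)) * h q

lemma schur2_zero_mul_schur2_zero {p q : ℕ} (hqp : q ≤ p) :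
    schur2 p 0 * schur2 q 0 = ∑ k ∈ Finset.range (q + 1), schur2 (p + q - k) k := by
  induction q generalizing p with
  | zero => simp [schur2_zero_zero]
  | succ q ih =>
    obtain ⟨p, rfl⟩ : ∃ p', p = p' + 1 := ⟨p - 1, by omega⟩
    rw [schur2_succ_zero_mul_schur2_succ_zero, ih (by omega), Finset.mul_sum,
      Finset.sum_range_succ' _ (q + 1), add_comm, Nat.sub_zero,
      show p + 1 + (q + 1) = p + q + 2 by omega]
    refine congrArg (· + _) (Finset.sum_congr rfl fun k hk => ?_)
    rw [Finset.mem_range] at hk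
    rw [← pow_one (X 0 * X 1), X_mul_X_pow_mul_schur2 1 (by omega),
      show p + q + 2 - (k + 1) = p + q - k + 1 by omega]

lemma schur2_mul_schur2 {i j a b : ℕ} (hji : j ≤ i) (hba : b ≤ a) (h : a - b ≤ i - j) :
    schur2 i j * schur2 a b =
      ∑ k ∈ Finset.range (a - b + 1), schur2 (i + a - k) (j + b + k) := by
  obtain ⟨p, rfl⟩ := Nat.exists_eq_add_of_le hji
  obtain ⟨q, rfl⟩ := Nat.exists_eq_add_of_le hba
  have hp := X_mul_X_pow_mul_schur2 j (Nat.zero_le p)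
  have hq := X_mul_X_pow_mul_schur2 b (Nat.zero_le q)
  rw [zero_add, add_comm] at hp hq
  rw [← hp, ← hq, mul_mul_mul_comm, ← pow_add, Nat.add_sub_cancel_left,
    schur2_zero_mul_schur2_zero (by omega), Finset.mul_sum]
  refine Finset.sum_congr rfl fun k hk => ?_
  rw [Finset.mem_range] at hk
  rw [X_mul_X_pow_mul_schur2 _ (by omega)]
  congr 1 <;> omega

lemma schur2_mem_of_le {n i j : ℕ} {I : Ideal (MvPolynomial (Fin 2) ℚ)}
    (hn : schur2 n 0 ∈ I) (hn' : schur2 (n + 1) 0 ∈ I) (hji : j ≤ i) (hni : n ≤ i) :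
    schur2 i j ∈ I := by
  have hrow : ∀ k, schur2 (n + k) 0 ∈ I ∧ schur2 (n + k + 1) 0 ∈ I := by
    intro k
    induction k with
    | zero => exact ⟨hn, hn'⟩
    | succ k ih =>
      refine ⟨ih.2, ?_⟩
      have hrec : schur2 (n + k + 2) 0 =
          (X 0 + X 1) * schur2 (n + k + 1) 0 - X 0 * X 1 * schur2 (n + k) 0 := by
        rw [X_add_X_mul_schur2 (by omega), ← pow_one (X 0 * X 1), X_mul_X_pow_mul_schur2 1 (by omega)]
        ring
      rw [show n + (k + 1) + 1 = n + k + 2 by omega, hrec]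
      exact I.sub_mem (I.mul_mem_left _ ih.2) (I.mul_mem_left _ ih.1)
  induction j generalizing i with
  | zero =>
    obtain ⟨k, rfl⟩ := Nat.exists_eq_add_of_le hni
    exact (hrow k).1
  | succ j ih =>
    rw [show schur2 i (j + 1) = (X 0 + X 1) * schur2 i j - schur2 (i + 1) j by
      rw [X_add_X_mul_schur2 hji]; ring]
    exact I.sub_mem (I.mul_mem_left _ (ih (by omega) hni)) (ih (by omega) (by omega))

lemma schur2_mul_schur2_mem {n i j a b : ℕ} {I : Ideal (MvPolynomial (Fin 2) ℚ)}
    (hn : schur2 n 0 ∈ I) (hn' : schur2 (n + 1) 0 ∈ I) (hji : j ≤ i) (hba : b ≤ a)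
    (h : a - b ≤ i - j) (hnib : n ≤ i + b) :
    schur2 i j * schur2 a b ∈ I := by
  rw [schur2_mul_schur2 hji hba h]
  refine I.sum_mem fun k hk => ?_
  rw [Finset.mem_range] at hk
  exact schur2_mem_of_le hn hn' (by omega) (by omega)

theorem schur2_duality_general (N i j a b : ℕ) (hN : 2 ≤ N)
    (hji : j ≤ i) (hba : b ≤ a) (hsum : i + j + a + b = 2 * (N - 2)) :
    ((a = N - 2 - j ∧ b = N - 2 - i) →
      schur2 i j * schur2 a b - schur2 (N - 2) (N - 2)
        ∈ Ideal.span {schur2 (N - 1) 0, schur2 N 0})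
    ∧ (¬(a = N - 2 - j ∧ b = N - 2 - i) →
      schur2 i j * schur2 a b ∈ Ideal.span {schur2 (N - 1) 0, schur2 N 0}) := by
  obtain ⟨n, rfl⟩ : ∃ n, N = n + 1 := ⟨N - 1, by omega⟩
  rw [Nat.add_sub_cancel]
  set I := Ideal.span {schur2 n 0, schur2 (n + 1) 0}
  have hn : schur2 n 0 ∈ I := Ideal.subset_span (by simp)
  have hn' : schur2 (n + 1) 0 ∈ I := Ideal.subset_span (by simp)
  constructor
  · rintro ⟨ha', hb'⟩
    rw [schur2_mul_schur2 hji hba (by omega), Finset.sum_range_succ,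
      show i + a - (a - b) = n + 1 - 2 by omega, show j + b + (a - b) = n + 1 - 2 by omega,
      add_sub_cancel_right]
    refine I.sum_mem fun k hk => ?_
    rw [Finset.mem_range] at hk
    exact schur2_mem_of_le hn hn' (by omega) (by omega)
  · intro hne
    rcases le_total (a - b) (i - j) with h | h
    · exact schur2_mul_schur2_mem hn hn' hji hba h (by omega)
    · rw [mul_comm]
      exact schur2_mul_schur2_mem hn hn' hba hji h (by omega)

/-- Duality in the cohomology of the Grassmannian `G_{2,N}`: for `N ≥ 2`, `i ≥ j ≥ 0`,
`a ≥ b ≥ 0` with `i ≤ N−2`, `a ≤ N−2` and `i+j+a+b = 2(N−2)`: if `(a,b) = (N−2−j, N−2−i)` then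
`π_{i,j}·π_{a,b} − π_{N−2,N−2}` lies in the ideal of `ℚ[x,y]` generated by `π_{N−1,0}` and
`π_{N,0}`; otherwise `π_{i,j}·π_{a,b}` itself lies in that ideal. -/
theorem schur2_duality (N i j a b : ℕ) (hN : 2 ≤ N)
    (hji : j ≤ i) (hba : b ≤ a) (hi : i ≤ N - 2) (ha : a ≤ N - 2)
    (hsum : i + j + a + b = 2 * (N - 2)) :
    ((a = N - 2 - j ∧ b = N - 2 - i) →
      schur2 i j * schur2 a b - schur2 (N - 2) (N - 2)
        ∈ Ideal.span {schur2 (N - 1) 0, schur2 N 0})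
    ∧ (¬(a = N - 2 - j ∧ b = N - 2 - i) →
      schur2 i j * schur2 a b ∈ Ideal.span {schur2 (N - 1) 0, schur2 N 0}) :=
  schur2_duality_general N i j a b hN hji hba hsum
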